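/- arXiv:2401.16332 — 5 statements merged into one kernel-verified Lean document; each statement's English description precedes it below -/
import Mathlib

section
/- Let G and B be finite nonempty sets of indices, let r, δ ∈ ℝᵈ, and let u : (G ∪ B) → ℝᵈ assign a vector to each index. Suppose that for every i ∈ G and j ∈ B, ⟨δ, u i - u j⟩ ≥ Δ·‖δ‖ for some Δ > 0. Then (Σ_{j∈B} exp⟨r + δ, u j⟩) / (Σ_{i∈G} exp⟨r + δ, u i⟩) ≤ exp(-Δ·‖δ‖) · (Σ_{j∈B} exp⟨r, u j⟩) / (Σ_{i∈G} exp⟨r, u i⟩). -/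
theorem stmt_2 {ι : Type*} [Fintype ι] {d : ℕ} (G B : Finset ι)
    (hG : G.Nonempty) (hB : B.Nonempty)
    (r δ : EuclideanSpace ℝ (Fin d)) (u : ι → EuclideanSpace ℝ (Fin d))
    (Δ : ℝ) (hΔ : 0 < Δ)
    (hmargin : ∀ i ∈ G, ∀ j ∈ B, (inner ℝ δ (u i - u j) : ℝ) ≥ Δ * ‖δ‖) :
    (∑ j ∈ B, Real.exp (inner ℝ (r + δ) (u j))) /
      (∑ i ∈ G, Real.exp (inner ℝ (r + δ) (u i))) ≤
    Real.exp (-(Δ * ‖δ‖)) *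
      ((∑ j ∈ B, Real.exp (inner ℝ r (u j))) /
        (∑ i ∈ G, Real.exp (inner ℝ r (u i)))) := by
  have hG' : (0:ℝ) < ∑ i ∈ G, Real.exp (inner ℝ (r + δ) (u i)) :=
    Finset.sum_pos (fun i _ => Real.exp_pos _) hG
  have hGs : (0:ℝ) < ∑ i ∈ G, Real.exp (inner ℝ r (u i)) :=
    Finset.sum_pos (fun i _ => Real.exp_pos _) hG
  rw [mul_div_assoc', div_le_div_iff₀ hG' hGs]
  rw [Finset.sum_mul_sum, mul_assoc, Finset.sum_mul_sum, Finset.mul_sum]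
  apply Finset.sum_le_sum
  intro j hj
  rw [Finset.mul_sum]
  apply Finset.sum_le_sum
  intro i hi
  rw [← Real.exp_add, ← Real.exp_add, ← Real.exp_add]
  apply Real.exp_le_exp.mpr
  have h := hmargin i hi j hj
  rw [inner_sub_right] at h
  have h1 : (inner ℝ (r + δ) (u j) : ℝ) = inner ℝ r (u j) + inner ℝ δ (u j) := by
    rw [inner_add_left]
  have h2 : (inner ℝ (r + δ) (u i) : ℝ) = inner ℝ r (u i) + inner ℝ δ (u i) := by
    rw [inner_add_left]
  rw [h1, h2]
  linarith
end

section
/- Let G and B be finite nonempty sets, r, δ ∈ ℝᵈ, u : (G ∪ B) → ℝᵈ, and suppose ⟨δ/‖δ‖, u i - u j⟩ ≥ Δ for all i ∈ G, j ∈ B, with Δ > 0 and δ ≠ 0. Define the behavior expectation as B(δ) = (Σ_{i∈G} exp⟨r+δ, u i⟩ - Σ_{j∈B} exp⟨r+δ, u j⟩) / (Σ_{i∈G} exp⟨r+δ, u i⟩ + Σ_{j∈B} exp⟨r+δ, u j⟩). Then B(δ) ≥ tanh(Δ·‖δ‖/2 + arctanh(B₀)), where B₀ = B(0). -/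
noncomputable def Real.arctanh (x : ℝ) : ℝ := (1 / 2) * Real.log ((1 + x) / (1 - x))

lemma tanh_half_log {x : ℝ} (hx : 0 < x) :
    Real.tanh ((1/2) * Real.log x) = (x - 1) / (x + 1) := by
  have hs : Real.sqrt x ≠ 0 := by positivity
  have h1 : Real.exp ((1/2) * Real.log x) = Real.sqrt x := by
    rw [Real.sqrt_eq_rpow, Real.rpow_def_of_pos hx]; ring_nf
  have h2 : Real.exp (-((1/2) * Real.log x)) = (Real.sqrt x)⁻¹ := by
    rw [Real.exp_neg, h1]
  rw [Real.tanh_eq_sinh_div_cosh, Real.sinh_eq, Real.cosh_eq, h1, h2]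
  have hsq : Real.sqrt x * Real.sqrt x = x := Real.mul_self_sqrt hx.le
  field_simp
  rw [Real.sq_sqrt hx.le]; ring

set_option maxHeartbeats 1000000 in
theorem stmt_3 {ι : Type*} [Fintype ι] {d : ℕ} (G B : Finset ι)
    (hG : G.Nonempty) (hB : B.Nonempty)
    (r δ : EuclideanSpace ℝ (Fin d)) (u : ι → EuclideanSpace ℝ (Fin d))
    (Δ : ℝ) (hΔ : 0 < Δ) (hδ : δ ≠ 0)
    (hmargin : ∀ i ∈ G, ∀ j ∈ B, (inner ℝ ((‖δ‖)⁻¹ • δ) (u i - u j) : ℝ) ≥ Δ)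
    (Bfun : EuclideanSpace ℝ (Fin d) → ℝ)
    (hBfun : ∀ v, Bfun v =
      ((∑ i ∈ G, Real.exp (inner ℝ (r + v) (u i))) -
        ∑ j ∈ B, Real.exp (inner ℝ (r + v) (u j))) /
      ((∑ i ∈ G, Real.exp (inner ℝ (r + v) (u i))) +
        ∑ j ∈ B, Real.exp (inner ℝ (r + v) (u j)))) :
    Bfun δ ≥ Real.tanh (Δ * ‖δ‖ / 2 + Real.arctanh (Bfun 0)) := by
  have hδn : (0:ℝ) < ‖δ‖ := norm_pos_iff.mpr hδ
  set A : ℝ := ∑ i ∈ G, Real.exp (inner ℝ (r + δ) (u i)) with hA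
  set Bb : ℝ := ∑ j ∈ B, Real.exp (inner ℝ (r + δ) (u j)) with hBb
  set C : ℝ := ∑ i ∈ G, Real.exp (inner ℝ (r : EuclideanSpace ℝ (Fin d)) (u i)) with hC
  set D : ℝ := ∑ j ∈ B, Real.exp (inner ℝ (r : EuclideanSpace ℝ (Fin d)) (u j)) with hD
  have hApos : 0 < A := Finset.sum_pos (fun i _ => Real.exp_pos _) hG
  have hBpos : 0 < Bb := Finset.sum_pos (fun i _ => Real.exp_pos _) hB
  have hCpos : 0 < C := Finset.sum_pos (fun i _ => Real.exp_pos _) hG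
  have hDpos : 0 < D := Finset.sum_pos (fun i _ => Real.exp_pos _) hB
  -- key inequality
  have key : Real.exp (Δ * ‖δ‖) * (C * Bb) ≤ A * D := by
    have eAD : A * D = ∑ i ∈ G, ∑ j ∈ B,
        Real.exp (inner ℝ (r + δ) (u i)) * Real.exp (inner ℝ (r : EuclideanSpace ℝ (Fin d)) (u j)) :=
      Finset.sum_mul_sum _ _ _ _
    have eCB : C * Bb = ∑ i ∈ G, ∑ j ∈ B,
        Real.exp (inner ℝ (r : EuclideanSpace ℝ (Fin d)) (u i)) * Real.exp (inner ℝ (r + δ) (u j)) :=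
      Finset.sum_mul_sum _ _ _ _
    rw [eAD, eCB, Finset.mul_sum]
    simp_rw [Finset.mul_sum]
    refine Finset.sum_le_sum (fun i hi => Finset.sum_le_sum (fun j hj => ?_))
    rw [← Real.exp_add, ← Real.exp_add, ← Real.exp_add]
    apply Real.exp_le_exp.mpr
    have h1 := hmargin i hi j hj
    rw [real_inner_smul_left, inner_sub_right] at h1
    have h2 : Δ * ‖δ‖ ≤ (inner ℝ δ (u i) : ℝ) - inner ℝ δ (u j) :=
      (le_div_iff₀ hδn).mp (by rwa [ge_iff_le, inv_mul_eq_div] at h1)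
    have e1 : (inner ℝ (r + δ) (u i) : ℝ) =
        inner ℝ (r : EuclideanSpace ℝ (Fin d)) (u i) + inner ℝ δ (u i) := inner_add_left r δ (u i)
    have e2 : (inner ℝ (r + δ) (u j) : ℝ) =
        inner ℝ (r : EuclideanSpace ℝ (Fin d)) (u j) + inner ℝ δ (u j) := inner_add_left r δ (u j)
    rw [e1, e2]
    linarith
  -- values of Bfun
  have hBδ : Bfun δ = (A - Bb) / (A + Bb) := by rw [hBfun]
  have hB0 : Bfun 0 = (C - D) / (C + D) := by
    rw [hBfun]; simp only [add_zero]; rfl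
  -- arctanh computation
  have harc : Real.arctanh (Bfun 0) = (1/2) * Real.log (C / D) := by
    rw [hB0, Real.arctanh]
    norm_num
    congr 1
    rw [show (1 + (C - D) / (C + D)) / (1 - (C - D) / (C + D)) = C / D by
      field_simp; ring_nf; field_simp [hDpos.ne']]
  -- the angle equals (1/2) * log of X
  set X : ℝ := Real.exp (Δ * ‖δ‖) * (C / D) with hX
  have hXpos : 0 < X := mul_pos (Real.exp_pos _) (div_pos hCpos hDpos)
  have hangle : Δ * ‖δ‖ / 2 + Real.arctanh (Bfun 0) = (1/2) * Real.log X := by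
    rw [harc, hX, Real.log_mul (Real.exp_ne_zero _) (by positivity), Real.log_exp]
    ring
  rw [hangle, tanh_half_log hXpos, hBδ, ge_iff_le]
  have hXle : X * Bb ≤ A := by
    rw [hX]
    have he : Real.exp (Δ * ‖δ‖) * (C / D) * Bb = Real.exp (Δ * ‖δ‖) * (C * Bb) / D := by
      ring
    rw [he, div_le_iff₀ hDpos]
    exact key
  clear_value A Bb C D X
  rw [div_le_div_iff₀ (by linarith) (by linarith)]
  nlinarith [hXle, hBpos, hApos, hXpos]
end

section
/- Under the hypotheses of the previous theorem (margin-Δ linear classification of aligned vs misaligned token embeddings by δ/‖δ‖), for any ε > 0 and any B₀ ∈ (-1, 1), if ‖δ‖ > (2/Δ)·(arctanh(1-ε) - arctanh(B₀)), then B(δ) > 1 - ε. -/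
theorem stmt_4 {ι : Type*} [Fintype ι] {d : ℕ} (G B : Finset ι)
    (hG : G.Nonempty) (hB : B.Nonempty)
    (r δ : EuclideanSpace ℝ (Fin d)) (u : ι → EuclideanSpace ℝ (Fin d))
    (Δ ε : ℝ) (hΔ : 0 < Δ) (hε : 0 < ε) (hδ : δ ≠ 0)
    (hmargin : ∀ i ∈ G, ∀ j ∈ B, (inner ℝ ((‖δ‖)⁻¹ • δ) (u i - u j) : ℝ) ≥ Δ)
    (Bfun : EuclideanSpace ℝ (Fin d) → ℝ)
    (hBfun : ∀ v, Bfun v =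
      ((∑ i ∈ G, Real.exp (inner ℝ (r + v) (u i))) -
        ∑ j ∈ B, Real.exp (inner ℝ (r + v) (u j))) /
      ((∑ i ∈ G, Real.exp (inner ℝ (r + v) (u i))) +
        ∑ j ∈ B, Real.exp (inner ℝ (r + v) (u j))))
    (hB0 : Bfun 0 ∈ Set.Ioo (-1 : ℝ) 1)
    (hnorm : ‖δ‖ > (2 / Δ) * (Real.arctanh (1 - ε) - Real.arctanh (Bfun 0))) :
    Bfun δ > 1 - ε := by
  have hδpos : (0:ℝ) < ‖δ‖ := norm_pos_iff.mpr hδ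
  have hmargin' : ∀ i ∈ G, ∀ j ∈ B,
      (inner ℝ δ (u j) : ℝ) + Δ * ‖δ‖ ≤ (inner ℝ δ (u i) : ℝ) := by
    intro i hi j hj
    have h := hmargin i hi j hj
    rw [real_inner_smul_left, inner_sub_right] at h
    have h2 := mul_le_mul_of_nonneg_left h hδpos.le
    rw [← mul_assoc, mul_inv_cancel₀ hδpos.ne', one_mul] at h2
    linarith
  set a := ∑ i ∈ G, Real.exp (inner ℝ (r + δ) (u i) : ℝ) with ha
  set b := ∑ j ∈ B, Real.exp (inner ℝ (r + δ) (u j) : ℝ) with hb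
  set c := ∑ i ∈ G, Real.exp (inner ℝ r (u i) : ℝ) with hc
  set e := ∑ j ∈ B, Real.exp (inner ℝ r (u j) : ℝ) with he
  have hapos : 0 < a := Finset.sum_pos (fun i _ => Real.exp_pos _) hG
  have hbpos : 0 < b := Finset.sum_pos (fun i _ => Real.exp_pos _) hB
  have hcpos : 0 < c := Finset.sum_pos (fun i _ => Real.exp_pos _) hG
  have hepos : 0 < e := Finset.sum_pos (fun i _ => Real.exp_pos _) hB
  have hBd : Bfun δ = (a - b) / (a + b) := hBfun δ
  have hB0' : Bfun 0 = (c - e) / (c + e) := by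
    rw [hBfun]; simp [hc, he]
  set K := Real.exp (-(Δ * ‖δ‖)) with hK
  have hKpos : 0 < K := Real.exp_pos _
  have key : b * c ≤ K * (a * e) := by
    have expand : K * (a * e) = ∑ j ∈ B, ∑ i ∈ G,
        K * (Real.exp (inner ℝ (r + δ) (u i) : ℝ) * Real.exp (inner ℝ r (u j) : ℝ)) := by
      rw [ha, he, Finset.sum_mul_sum]
      simp only [Finset.mul_sum]
      rw [Finset.sum_comm]
    have expand2 : b * c = ∑ j ∈ B, ∑ i ∈ G,
        Real.exp (inner ℝ (r + δ) (u j) : ℝ) * Real.exp (inner ℝ r (u i) : ℝ) := by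
      rw [hb, hc, Finset.sum_mul_sum]
    rw [expand, expand2]
    refine Finset.sum_le_sum fun j hj => Finset.sum_le_sum fun i hi => ?_
    rw [hK, ← Real.exp_add, ← Real.exp_add, ← Real.exp_add]
    apply Real.exp_le_exp.mpr
    have hm := hmargin' i hi j hj
    have e1 : (inner ℝ (r + δ) (u i) : ℝ) = inner ℝ r (u i) + inner ℝ δ (u i) :=
      inner_add_left _ _ _
    have e2 : (inner ℝ (r + δ) (u j) : ℝ) = inner ℝ r (u j) + inner ℝ δ (u j) :=
      inner_add_left _ _ _
    rw [e1, e2]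
    linarith
  clear_value a b c e K
  rcases lt_or_ge ε 2 with hε2 | hε2
  · -- main case
    have h2ε : 0 < 2 - ε := by linarith
    have harc1 : Real.arctanh (1 - ε) = (1/2) * Real.log ((2 - ε) / ε) := by
      rw [Real.arctanh]; ring_nf
    have harc2 : Real.arctanh (Bfun 0) = (1/2) * Real.log (c / e) := by
      rw [Real.arctanh, hB0']
      congr 1
      have hce : c + e ≠ 0 := by positivity
      field_simp
      ring
    have hΔδ : Δ * ‖δ‖ > Real.log ((2 - ε) / ε) - Real.log (c / e) := by
      have h := (mul_lt_mul_iff_right₀ hΔ).mpr hnorm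
      rw [harc1, harc2] at h
      have hΔne : Δ ≠ 0 := hΔ.ne'
      calc Real.log ((2 - ε) / ε) - Real.log (c / e)
          = Δ * ((2 / Δ) * ((1/2) * Real.log ((2 - ε)/ε) - (1/2) * Real.log (c/e))) := by
            field_simp
        _ < Δ * ‖δ‖ := h
    have hlogs : Δ * ‖δ‖ > Real.log ((2 - ε) * e / (ε * c)) := by
      rw [Real.log_div (by positivity) (by positivity),
        Real.log_mul h2ε.ne' hepos.ne', Real.log_mul hε.ne' hcpos.ne']
      rw [Real.log_div h2ε.ne' hε.ne', Real.log_div hcpos.ne' hepos.ne'] at hΔδ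
      linarith
    have hKlt : K < ε * c / ((2 - ε) * e) := by
      have hpos : (0:ℝ) < ε * c / ((2 - ε) * e) :=
        div_pos (mul_pos hε hcpos) (mul_pos h2ε hepos)
      rw [hK, ← Real.exp_log hpos]
      apply Real.exp_lt_exp.mpr
      have hrw : Real.log (ε * c / ((2 - ε) * e)) = - Real.log ((2 - ε) * e / (ε * c)) := by
        rw [← Real.log_inv]
        congr 1
        rw [inv_div]
      rw [hrw]
      linarith
    have hKlt' : K * ((2 - ε) * e) < ε * c :=
      (lt_div_iff₀ (mul_pos h2ε hepos)).mp hKlt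
    have hfin : b * (2 - ε) < ε * a := by
      have h1 : b * c * ((2 - ε) * e) ≤ K * (a * e) * ((2 - ε) * e) :=
        mul_le_mul_of_nonneg_right key (mul_pos h2ε hepos).le
      have h2 : K * ((2 - ε) * e) * (a * e) < ε * c * (a * e) :=
        (mul_lt_mul_iff_left₀ (mul_pos hapos hepos)).mpr hKlt'
      have h3 : b * (2 - ε) * (c * e) < ε * a * (c * e) := by nlinarith
      exact (mul_lt_mul_iff_left₀ (mul_pos hcpos hepos)).mp h3
    rw [hBd, gt_iff_lt, lt_div_iff₀ (by linarith)]
    nlinarith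
  · -- trivial case: 1 - ε ≤ -1 < Bfun δ
    rw [hBd, gt_iff_lt, lt_div_iff₀ (by linarith)]
    nlinarith
end

section
/- Under the soft-margin assumption — aligned/misaligned token embeddings classified by δ/‖δ‖ with margin Δ except for a misclassified set M whose unsteered probability mass satisfies Σ_{a∈M} P(a) ≤ δ₀·Σ_{a∈G} P(a), with ⟨δ/‖δ‖, u i - u j⟩ > -M₀ for all i ∈ G, j ∈ M — the steered behavior expectation satisfies B(δ) ≥ tanh(Δ·‖δ‖/2 + arctanh(B₀)) - 2·δ₀·exp(M₀·‖δ‖). -/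
private lemma tanh_form (x : ℝ) :
    Real.tanh x = (Real.exp (2 * x) - 1) / (Real.exp (2 * x) + 1) := by
  have h := Real.exp_pos x
  rw [Real.tanh_eq_sinh_div_cosh, Real.sinh_eq, Real.cosh_eq, two_mul, Real.exp_add,
    Real.exp_neg]
  have h' : (0:ℝ) < Real.exp x + (Real.exp x)⁻¹ := by positivity
  rw [div_div_div_cancel_right₀ (two_ne_zero)]
  field_simp

set_option maxHeartbeats 1000000 in
theorem stmt_12 {ι : Type*} [Fintype ι] {d : ℕ} (G Bad M : Finset ι)
    (hG : G.Nonempty) (hBad : Bad.Nonempty)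
    (r δ : EuclideanSpace ℝ (Fin d)) (u : ι → EuclideanSpace ℝ (Fin d))
    (Δ δ₀ M₀ : ℝ) (hΔ : 0 < Δ) (hδ₀ : 0 < δ₀) (hM₀ : 0 < M₀) (hδ : δ ≠ 0)
    (hmargin : ∀ i ∈ G, ∀ j ∈ Bad, (inner ℝ ((‖δ‖)⁻¹ • δ) (u i - u j) : ℝ) ≥ Δ)
    (hmass : (∑ a ∈ M, Real.exp (inner ℝ r (u a))) ≤
      δ₀ * ∑ a ∈ G, Real.exp (inner ℝ r (u a)))
    (hdeep : ∀ i ∈ G, ∀ j ∈ M, (inner ℝ ((‖δ‖)⁻¹ • δ) (u i - u j) : ℝ) > -M₀)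
    (Bδ B₀ : ℝ)
    (hBδ : Bδ =
      ((∑ i ∈ G, Real.exp (inner ℝ (r + δ) (u i))) -
        ((∑ j ∈ Bad, Real.exp (inner ℝ (r + δ) (u j))) +
          ∑ a ∈ M, Real.exp (inner ℝ (r + δ) (u a)))) /
      ((∑ i ∈ G, Real.exp (inner ℝ (r + δ) (u i))) +
        (∑ j ∈ Bad, Real.exp (inner ℝ (r + δ) (u j))) +
          ∑ a ∈ M, Real.exp (inner ℝ (r + δ) (u a))))
    (hB₀ : B₀ =
      ((∑ i ∈ G, Real.exp (inner ℝ r (u i))) -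
        ∑ j ∈ Bad, Real.exp (inner ℝ r (u j))) /
      ((∑ i ∈ G, Real.exp (inner ℝ r (u i))) +
        ∑ j ∈ Bad, Real.exp (inner ℝ r (u j)))) :
    Bδ ≥ Real.tanh (Δ * ‖δ‖ / 2 + Real.arctanh B₀) -
      2 * δ₀ * Real.exp (M₀ * ‖δ‖) := by
  have hn : (0:ℝ) < ‖δ‖ := norm_pos_iff.mpr hδ
  set P := ∑ i ∈ G, Real.exp (inner ℝ r (u i)) with hP_def
  set Q := ∑ j ∈ Bad, Real.exp (inner ℝ r (u j)) with hQ_def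
  set P' := ∑ i ∈ G, Real.exp (inner ℝ (r + δ) (u i)) with hP'_def
  set Q' := ∑ j ∈ Bad, Real.exp (inner ℝ (r + δ) (u j)) with hQ'_def
  set R' := ∑ a ∈ M, Real.exp (inner ℝ (r + δ) (u a)) with hR'_def
  have hP : 0 < P := Finset.sum_pos (fun i _ => Real.exp_pos _) hG
  have hQ : 0 < Q := Finset.sum_pos (fun i _ => Real.exp_pos _) hBad
  have hP' : 0 < P' := Finset.sum_pos (fun i _ => Real.exp_pos _) hG
  have hQ' : 0 < Q' := Finset.sum_pos (fun i _ => Real.exp_pos _) hBad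
  have hR' : 0 ≤ R' := Finset.sum_nonneg (fun i _ => (Real.exp_pos _).le)
  set c : ℝ := Real.exp (Δ * ‖δ‖) with hc_def
  set c₁ : ℝ := δ₀ * Real.exp (M₀ * ‖δ‖) with hc₁_def
  have hc : 0 < c := Real.exp_pos _
  -- margin in raw form
  have hmargin' : ∀ i ∈ G, ∀ j ∈ Bad,
      (inner ℝ δ (u j) : ℝ) + Δ * ‖δ‖ ≤ (inner ℝ δ (u i) : ℝ) := by
    intro i hi j hj
    have h := hmargin i hi j hj
    rw [real_inner_smul_left, inner_sub_right] at h
    have h2 : ‖δ‖⁻¹ * ((inner ℝ δ (u i) : ℝ) - inner ℝ δ (u j)) * ‖δ‖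
        = (inner ℝ δ (u i) : ℝ) - inner ℝ δ (u j) := by field_simp
    nlinarith [mul_le_mul_of_nonneg_right h hn.le]
  have hdeep' : ∀ i ∈ G, ∀ a ∈ M,
      (inner ℝ δ (u a) : ℝ) ≤ (inner ℝ δ (u i) : ℝ) + M₀ * ‖δ‖ := by
    intro i hi a ha
    have h := (hdeep i hi a ha).le
    rw [real_inner_smul_left, inner_sub_right] at h
    have h2 : ‖δ‖⁻¹ * ((inner ℝ δ (u i) : ℝ) - inner ℝ δ (u a)) * ‖δ‖
        = (inner ℝ δ (u i) : ℝ) - inner ℝ δ (u a) := by field_simp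
    nlinarith [mul_le_mul_of_nonneg_right h hn.le]
  -- Step 1 : c * (P * Q') ≤ P' * Q
  have step1 : c * (P * Q') ≤ P' * Q := by
    have e2 : P * Q' = ∑ i ∈ G, ∑ j ∈ Bad,
        Real.exp (inner ℝ r (u i)) * Real.exp (inner ℝ (r + δ) (u j)) :=
      Finset.sum_mul_sum _ _ _ _
    have e3 : P' * Q = ∑ i ∈ G, ∑ j ∈ Bad,
        Real.exp (inner ℝ (r + δ) (u i)) * Real.exp (inner ℝ r (u j)) :=
      Finset.sum_mul_sum _ _ _ _
    rw [e2, e3, Finset.mul_sum]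
    refine Finset.sum_le_sum (fun i hi => ?_)
    rw [Finset.mul_sum]
    refine Finset.sum_le_sum (fun j hj => ?_)
    simp only [inner_add_left, Real.exp_add]
    have key : c * Real.exp (inner ℝ δ (u j)) ≤ Real.exp (inner ℝ δ (u i)) := by
      rw [hc_def, ← Real.exp_add]
      exact Real.exp_le_exp.mpr (by linarith [hmargin' i hi j hj])
    calc c * (Real.exp (inner ℝ r (u i)) * (Real.exp (inner ℝ r (u j)) * Real.exp (inner ℝ δ (u j))))
        = (Real.exp (inner ℝ r (u i)) * Real.exp (inner ℝ r (u j))) *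
          (c * Real.exp (inner ℝ δ (u j))) := by ring
      _ ≤ (Real.exp (inner ℝ r (u i)) * Real.exp (inner ℝ r (u j))) *
          Real.exp (inner ℝ δ (u i)) := by
            exact mul_le_mul_of_nonneg_left key (by positivity)
      _ = Real.exp (inner ℝ r (u i)) * Real.exp (inner ℝ δ (u i)) * Real.exp (inner ℝ r (u j)) := by
            ring
  -- Step 2 : R' ≤ c₁ * P'
  have step2 : R' ≤ c₁ * P' := by
    have hcross : R' * P ≤ Real.exp (M₀ * ‖δ‖) *
        ((∑ a ∈ M, Real.exp (inner ℝ r (u a))) * P') := by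
      have e1 : R' * P = ∑ a ∈ M, ∑ i ∈ G,
          Real.exp (inner ℝ (r + δ) (u a)) * Real.exp (inner ℝ r (u i)) :=
        Finset.sum_mul_sum _ _ _ _
      have e2 : (∑ a ∈ M, Real.exp (inner ℝ r (u a))) * P' = ∑ a ∈ M, ∑ i ∈ G,
          Real.exp (inner ℝ r (u a)) * Real.exp (inner ℝ (r + δ) (u i)) :=
        Finset.sum_mul_sum _ _ _ _
      rw [e1, e2, Finset.mul_sum]
      refine Finset.sum_le_sum (fun a ha => ?_)
      rw [Finset.mul_sum]
      refine Finset.sum_le_sum (fun i hi => ?_)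
      simp only [inner_add_left, Real.exp_add]
      have key : Real.exp (inner ℝ δ (u a)) ≤
          Real.exp (M₀ * ‖δ‖) * Real.exp (inner ℝ δ (u i)) := by
        rw [← Real.exp_add]
        exact Real.exp_le_exp.mpr (by linarith [hdeep' i hi a ha])
      calc Real.exp (inner ℝ r (u a)) * Real.exp (inner ℝ δ (u a)) * Real.exp (inner ℝ r (u i))
          = (Real.exp (inner ℝ r (u a)) * Real.exp (inner ℝ r (u i))) *
            Real.exp (inner ℝ δ (u a)) := by ring
        _ ≤ (Real.exp (inner ℝ r (u a)) * Real.exp (inner ℝ r (u i))) *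
            (Real.exp (M₀ * ‖δ‖) * Real.exp (inner ℝ δ (u i))) := by
              exact mul_le_mul_of_nonneg_left key (by positivity)
        _ = Real.exp (M₀ * ‖δ‖) * (Real.exp (inner ℝ r (u a)) *
            (Real.exp (inner ℝ r (u i)) * Real.exp (inner ℝ δ (u i)))) := by ring
    have hmass' : (∑ a ∈ M, Real.exp (inner ℝ r (u a))) ≤ δ₀ * P := hmass
    have h3 : R' * P ≤ c₁ * P' * P := by
      have := mul_le_mul_of_nonneg_left
        (mul_le_mul_of_nonneg_right hmass' hP'.le) (Real.exp_pos (M₀ * ‖δ‖)).le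
      calc R' * P ≤ Real.exp (M₀ * ‖δ‖) * ((∑ a ∈ M, Real.exp (inner ℝ r (u a))) * P') :=
            hcross
        _ ≤ Real.exp (M₀ * ‖δ‖) * (δ₀ * P * P') := this
        _ = c₁ * P' * P := by rw [hc₁_def]; ring
    exact le_of_mul_le_mul_right h3 hP
  -- tanh value
  set T : ℝ := Δ * ‖δ‖ / 2 + Real.arctanh B₀ with hT_def
  have hPQ : (0:ℝ) < P + Q := by linarith
  have harg : (1 + B₀) / (1 - B₀) = P / Q := by
    rw [hB₀]
    have h1 : 1 + (P - Q) / (P + Q) = 2 * P / (P + Q) := by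
      rw [eq_div_iff hPQ.ne', add_mul, div_mul_cancel₀ _ hPQ.ne']
      ring
    have h2 : 1 - (P - Q) / (P + Q) = 2 * Q / (P + Q) := by
      rw [eq_div_iff hPQ.ne', sub_mul, div_mul_cancel₀ _ hPQ.ne']
      ring
    rw [h1, h2, div_div_div_cancel_right₀ hPQ.ne', mul_div_mul_left _ _ (two_ne_zero)]
  have harctanh : Real.arctanh B₀ = (1 / 2) * Real.log (P / Q) := by
    rw [Real.arctanh, harg]
  have h2T : 2 * T = Δ * ‖δ‖ + Real.log (P / Q) := by
    rw [hT_def, harctanh]; ring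
  have hexp2T : Real.exp (2 * T) = c * (P / Q) := by
    rw [h2T, Real.exp_add, Real.exp_log (div_pos hP hQ), hc_def]
  have hcPQ : (0:ℝ) < c * P + Q := by positivity
  have htanh : Real.tanh T = (c * P - Q) / (c * P + Q) := by
    rw [tanh_form, hexp2T]
    rw [div_eq_div_iff (by positivity) (ne_of_gt hcPQ)]
    field_simp [hQ.ne']
  have hS1 : (0:ℝ) < P' + Q' := by linarith
  have hS2 : (0:ℝ) < P' + Q' + R' := by linarith
  have h1 : (c * P - Q) / (c * P + Q) ≤ (P' - Q') / (P' + Q') := by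
    rw [div_le_div_iff₀ hcPQ hS1]
    nlinarith [step1]
  have h2 : (P' - Q') / (P' + Q') - Bδ ≤ 2 * R' / P' := by
    rw [hBδ]
    rw [div_sub_div _ _ (ne_of_gt hS1) (ne_of_gt hS2), div_le_div_iff₀ (by positivity) hP']
    nlinarith [mul_nonneg hR' (mul_nonneg hP'.le hQ'.le),
      mul_nonneg hR' (mul_nonneg hQ'.le hQ'.le),
      mul_nonneg (mul_nonneg hR' hR') hP'.le,
      mul_nonneg (mul_nonneg hR' hR') hQ'.le]
  have h3 : 2 * R' / P' ≤ 2 * c₁ := by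
    rw [div_le_iff₀ hP']
    linarith [step2]
  have hfinal : 2 * δ₀ * Real.exp (M₀ * ‖δ‖) = 2 * c₁ := by rw [hc₁_def]; ring
  rw [ge_iff_le, hfinal, htanh]
  linarith [h1, h2, h3]
end

section
/- Let X, C₊, C₋ be random events/variables with: with probability 1 - 2/T the steered helpfulness H satisfies H ≤ P₀/(P₀ + α(1-P₀)(1+m²λ²r²)), with probability 1/T it satisfies H ≤ P₀/(P₀ + (1-P₀)·e^{c₊λr}) with c₊ > 0, and with probability 1/T it satisfies H ≤ P₀/(P₀ + (1-P₀)·e^{c₋λr}) ≤ 1 with c₋ < 0. Then for r > 0, the expectation of H satisfies E[H] ≤ (1 - 1/T)·P₀/(P₀ + α'(1-P₀)(1 + m'²λ²r²)) + 1/T for appropriate α' ∈ (0,1] and m' = min(c₊, |c₋|, m), and lim_{r→∞} of the right-hand side equals 1/T. -/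
open Filter
set_option maxHeartbeats 1000000

theorem stmt_19 (T : ℕ) (hT : 2 < T) (P₀ α lam m cp cm : ℝ)
    (hP₀ : P₀ ∈ Set.Ioo (0 : ℝ) 1) (hα : α ∈ Set.Ioc (0 : ℝ) 1)
    (hlam : 0 < lam) (hm : 0 < m) (hcp : 0 < cp) (hcm : cm < 0)
    (EH : ℝ → ℝ)
    (hEH : ∀ r : ℝ, 0 < r → EH r ≤
      (1 - 2 / (T : ℝ)) * (P₀ / (P₀ + α * (1 - P₀) * (1 + m ^ 2 * lam ^ 2 * r ^ 2))) +
      (1 / (T : ℝ)) * (P₀ / (P₀ + (1 - P₀) * Real.exp (cp * lam * r))) +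
      (1 / (T : ℝ)) * 1) :
    ∃ α' : ℝ, α' ∈ Set.Ioc (0 : ℝ) 1 ∧
      (∀ r : ℝ, 0 < r → EH r ≤
        (1 - 1 / (T : ℝ)) *
          (P₀ / (P₀ + α' * (1 - P₀) *
            (1 + (min cp (min |cm| m)) ^ 2 * lam ^ 2 * r ^ 2))) + 1 / (T : ℝ)) ∧
      Tendsto (fun r : ℝ =>
        (1 - 1 / (T : ℝ)) *
          (P₀ / (P₀ + α' * (1 - P₀) *
            (1 + (min cp (min |cm| m)) ^ 2 * lam ^ 2 * r ^ 2))) + 1 / (T : ℝ))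
        atTop (nhds (1 / (T : ℝ))) := by
  obtain ⟨hP0, hP1⟩ := hP₀
  obtain ⟨hα0, hα1⟩ := hα
  set m' := min cp (min |cm| m) with hm'def
  have hm'pos : 0 < m' := lt_min hcp (lt_min (abs_pos.mpr (ne_of_lt hcm)) hm)
  have hm'm : m' ≤ m := le_trans (min_le_right _ _) (min_le_right _ _)
  have hm'cp : m' ≤ cp := min_le_left _ _
  have h1P : 0 < 1 - P₀ := by linarith
  have hT0 : (0:ℝ) < (T:ℝ) := by positivity
  have hT2 : (2:ℝ) < (T:ℝ) := by exact_mod_cast hT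
  refine ⟨min α (1/2), ⟨lt_min hα0 (by norm_num), le_trans (min_le_left _ _) hα1⟩, ?_, ?_⟩
  · intro r hr
    set α' := min α (1/2) with hα'def
    have hα'pos : 0 < α' := lt_min hα0 (by norm_num)
    have hden : 0 < P₀ + α' * (1 - P₀) * (1 + m' ^ 2 * lam ^ 2 * r ^ 2) := by positivity
    set g := P₀ / (P₀ + α' * (1 - P₀) * (1 + m' ^ 2 * lam ^ 2 * r ^ 2)) with hgdef
    have hf1 : P₀ / (P₀ + α * (1 - P₀) * (1 + m ^ 2 * lam ^ 2 * r ^ 2)) ≤ g := by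
      apply div_le_div_of_nonneg_left hP0.le hden
      have h2 : α' ≤ α := min_le_left _ _
      gcongr
    have hexp : (1 + cp ^ 2 * lam ^ 2 * r ^ 2) / 2 ≤ Real.exp (cp * lam * r) := by
      have hx : 0 ≤ cp * lam * r := by positivity
      have h3 := Real.sum_le_exp_of_nonneg hx 4
      norm_num [Finset.sum_range_succ, Nat.factorial] at h3
      nlinarith [pow_nonneg hx 3, h3]
    have hf2 : P₀ / (P₀ + (1 - P₀) * Real.exp (cp * lam * r)) ≤ g := by
      apply div_le_div_of_nonneg_left hP0.le (by positivity)
      have hα'half : α' ≤ 1/2 := min_le_right _ _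
      have hsq : m' ^ 2 ≤ cp ^ 2 := by nlinarith
      have h0m : (0:ℝ) ≤ m' := hm'pos.le
      have key : α' * (1 + m' ^ 2 * lam ^ 2 * r ^ 2) ≤ Real.exp (cp * lam * r) := by
        calc α' * (1 + m' ^ 2 * lam ^ 2 * r ^ 2)
            ≤ (1/2) * (1 + cp ^ 2 * lam ^ 2 * r ^ 2) := by gcongr
          _ ≤ Real.exp (cp * lam * r) := by linarith
      nlinarith [key]
    have hgpos : 0 ≤ g := by positivity
    calc EH r ≤ (1 - 2 / (T : ℝ)) * (P₀ / (P₀ + α * (1 - P₀) * (1 + m ^ 2 * lam ^ 2 * r ^ 2))) +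
        (1 / (T : ℝ)) * (P₀ / (P₀ + (1 - P₀) * Real.exp (cp * lam * r))) +
        (1 / (T : ℝ)) * 1 := hEH r hr
      _ ≤ (1 - 2 / (T : ℝ)) * g + (1 / (T : ℝ)) * g + (1 / (T : ℝ)) * 1 := by
          gcongr
          linarith [div_le_one_of_le₀ (by linarith : (2:ℝ) ≤ (T:ℝ)) hT0.le]
      _ = (1 - 1 / (T : ℝ)) * g + 1 / (T : ℝ) := by ring
  · set α' := min α (1/2) with hα'def
    have hα'pos : 0 < α' := lt_min hα0 (by norm_num)
    have hdenatTop : Tendsto (fun r : ℝ => P₀ + α' * (1 - P₀) * (1 + m' ^ 2 * lam ^ 2 * r ^ 2))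
        atTop atTop := by
      apply tendsto_atTop_add_const_left
      apply Tendsto.const_mul_atTop (by positivity)
      apply tendsto_atTop_add_const_left
      apply Tendsto.const_mul_atTop (by positivity)
      exact tendsto_pow_atTop (by norm_num)
    have h0 : Tendsto (fun r : ℝ => P₀ / (P₀ + α' * (1 - P₀) * (1 + m' ^ 2 * lam ^ 2 * r ^ 2)))
        atTop (nhds 0) := tendsto_const_nhds.div_atTop hdenatTop
    have := (h0.const_mul (1 - 1 / (T : ℝ))).add_const (1 / (T : ℝ))
    simpa using this
end
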